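/- arXiv:2110.13763 — 6 statements merged into one kernel-verified Lean document; each statement's English description precedes it below -/
import Mathlib

section
/- Let K be a commutative field, let V and W be finite-dimensional K-vector spaces, and let t : V × V → W be a symmetric K-bilinear map. Then the symmetric complexity satisfies S_K(t) ≤ dim_K(W) · dim_K(V) · (3·dim_K(V) − 1)/2. -/
/-- The symmetric bilinear complexity `S_K(t)` of a symmetric `K`-bilinear map
`t : V × V → W`: the smallest `k` such that `t` is a sum of `k` pure symmetric
bilinear maps `(v₁, v₂) ↦ φᵢ(v₁)φᵢ(v₂) • wᵢ` (valued in `ℕ∞`). -/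
noncomputable def Ssym (K : Type*) [Field K] (V W : Type*) [AddCommGroup V] [Module K V]
    [AddCommGroup W] [Module K W] (t : V →ₗ[K] V →ₗ[K] W) : ℕ∞ :=
  sInf {N : ℕ∞ | ∃ (k : ℕ) (φ : Fin k → (V →ₗ[K] K)) (w : Fin k → W),
    N = k ∧ ∀ x y, t x y = ∑ i, (φ i x * φ i y) • w i}

lemma pad_le {K V W : Type*} [Field K] [AddCommGroup V] [Module K V]
    [AddCommGroup W] [Module K W] (t : V →ₗ[K] V →ₗ[K] W)
    {ι : Type*} [Fintype ι] (φ : ι → (V →ₗ[K] K)) (w : ι → W) (N : ℕ)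
    (hcard : Fintype.card ι ≤ N)
    (ht : ∀ x y, t x y = ∑ i, (φ i x * φ i y) • w i) :
    Ssym K V W t ≤ N := by
  classical
  obtain ⟨e⟩ : Nonempty (ι ↪ Fin N) := by
    apply Function.Embedding.nonempty_of_card_le
    simpa using hcard
  refine sInf_le ⟨N, Function.extend e φ 0, Function.extend e w 0, rfl, fun x y => ?_⟩
  rw [ht x y]
  rw [← Finset.sum_subset (Finset.subset_univ (Finset.univ.map e))
      (f := fun j => (Function.extend e φ 0 j x * Function.extend e φ 0 j y) •
        Function.extend e w 0 j) ?_]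
  · rw [Finset.sum_map]
    simp only [e.injective.extend_apply]
  · intro j _ hj
    have h : ¬ ∃ a, e a = j := by simpa [Finset.mem_map] using hj
    beta_reduce
    rw [Function.extend_apply' w _ _ h]
    simp

open Finset in
lemma expand_basis {K V W : Type*} [Field K] [AddCommGroup V] [Module K V]
    [AddCommGroup W] [Module K W] (t : V →ₗ[K] V →ₗ[K] W)
    {n : ℕ} (b : Module.Basis (Fin n) K V) (x y : V) :
    t x y = ∑ p : Fin n × Fin n,
      (b.repr x p.1 * b.repr y p.2) • t (b p.1) (b p.2) := by
  conv_lhs => rw [← b.sum_repr x, ← b.sum_repr y]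
  rw [Fintype.sum_prod_type]
  simp only [map_sum, map_smul, LinearMap.sum_apply, LinearMap.smul_apply, Finset.smul_sum,
    smul_smul]
  rw [Finset.sum_comm]
  exact Finset.sum_congr rfl fun i _ => Finset.sum_congr rfl fun j _ => by rw [mul_comm]

open Finset in
lemma tri_split {M : Type*} [AddCommMonoid M] {n : ℕ} (f : Fin n × Fin n → M) :
    ∑ p : Fin n × Fin n, f p =
      (∑ i : Fin n, f (i, i)) +
        ∑ p ∈ univ.filter (fun p : Fin n × Fin n => p.1 < p.2), (f p + f p.swap) := by
  classical
  rw [← Finset.sum_filter_add_sum_filter_not univ (fun p : Fin n × Fin n => p.1 < p.2) f,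
    ← Finset.sum_filter_add_sum_filter_not (univ.filter (fun p : Fin n × Fin n => ¬ p.1 < p.2))
      (fun p : Fin n × Fin n => p.1 = p.2) f]
  have hdiag : ∑ p ∈ (univ.filter (fun p : Fin n × Fin n => ¬ p.1 < p.2)).filter
      (fun p : Fin n × Fin n => p.1 = p.2), f p = ∑ i : Fin n, f (i, i) := by
    apply Finset.sum_nbij' (i := fun p : Fin n × Fin n => p.1) (j := fun i : Fin n => (i, i)) <;>
      simp +contextual [Prod.ext_iff, eq_comm]
  have hgt : ∑ p ∈ (univ.filter (fun p : Fin n × Fin n => ¬ p.1 < p.2)).filter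
      (fun p : Fin n × Fin n => ¬ p.1 = p.2), f p =
      ∑ p ∈ univ.filter (fun p : Fin n × Fin n => p.1 < p.2), f p.swap := by
    apply Finset.sum_nbij' (i := Prod.swap) (j := Prod.swap) <;>
      simp +contextual [Prod.ext_iff]
    · omega
    · omega
  rw [hdiag, hgt, Finset.sum_add_distrib]
  abel

open Finset in
lemma sym_le_aux {K V W : Type*} [Field K] [AddCommGroup V] [Module K V]
    [AddCommGroup W] [Module K W] (t : V →ₗ[K] V →ₗ[K] W)
    (hsym : ∀ x y, t x y = t y x) {n : ℕ} (b : Module.Basis (Fin n) K V) :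
    Ssym K V W t ≤ ((n * (3 * n - 1) / 2 : ℕ) : ℕ∞) := by
  classical
  set S : Finset (Fin n × Fin n) := univ.filter (fun p : Fin n × Fin n => p.1 < p.2) with hSdef
  have hS : n * n = n + S.card * 2 := by
    have := tri_split (n := n) (fun _ => (1 : ℕ))
    simpa [Finset.card_univ, mul_two] using this
  have key : n * (3 * n - 1) = 2 * (n + 3 * S.card) := by
    rcases n with _ | k
    · omega
    · have e1 : 3 * (k + 1) - 1 = 3 * k + 2 := by omega
      rw [e1]
      zify at hS ⊢
      linear_combination 3 * hS
  have hdiv : n * (3 * n - 1) / 2 = n + 3 * S.card := by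
    rw [key, Nat.mul_div_cancel_left _ (by norm_num)]
  have hcard : Fintype.card (Fin n ⊕ (↥S × Fin 3)) ≤ n * (3 * n - 1) / 2 := by
    rw [hdiv]
    simp only [Fintype.card_sum, Fintype.card_fin, Fintype.card_prod, Fintype.card_coe]
    omega
  refine pad_le t
    (Sum.elim (fun i => b.coord i)
      (fun q : ↥S × Fin 3 =>
        ![b.coord (q.1 : Fin n × Fin n).1 + b.coord (q.1 : Fin n × Fin n).2,
          b.coord (q.1 : Fin n × Fin n).1, b.coord (q.1 : Fin n × Fin n).2] q.2))
    (Sum.elim (fun i => t (b i) (b i))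
      (fun q : ↥S × Fin 3 =>
        ![t (b (q.1 : Fin n × Fin n).1) (b (q.1 : Fin n × Fin n).2),
          -(t (b (q.1 : Fin n × Fin n).1) (b (q.1 : Fin n × Fin n).2)),
          -(t (b (q.1 : Fin n × Fin n).1) (b (q.1 : Fin n × Fin n).2))] q.2))
    _ hcard ?_
  intro x y
  rw [expand_basis t b x y,
    tri_split (fun p : Fin n × Fin n => (b.repr x p.1 * b.repr y p.2) • t (b p.1) (b p.2)),
    Fintype.sum_sum_type]
  congr 1
  rw [Fintype.sum_prod_type, ← hSdef, ← Finset.sum_coe_sort S]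
  refine Finset.sum_congr rfl fun q _ => ?_
  rw [Fin.sum_univ_three]
  simp only [Sum.elim_inr, Matrix.cons_val_zero, Matrix.cons_val_one, Matrix.head_cons,
    Matrix.cons_val_two, Matrix.tail_cons, Module.Basis.coord_apply, LinearMap.add_apply,
    Prod.fst_swap, Prod.snd_swap]
  rw [hsym (b (q : Fin n × Fin n).2) (b (q : Fin n × Fin n).1)]
  module

theorem stmt1 (K V W : Type*) [Field K] [AddCommGroup V] [Module K V] [FiniteDimensional K V]
    [AddCommGroup W] [Module K W] [FiniteDimensional K W] (t : V →ₗ[K] V →ₗ[K] W)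
    (hsym : ∀ x y, t x y = t y x) :
    Ssym K V W t ≤
      ((Module.finrank K W * (Module.finrank K V * (3 * Module.finrank K V - 1) / 2) : ℕ) : ℕ∞) := by
  rcases Nat.eq_zero_or_pos (Module.finrank K W) with hm | hm
  · have hW : Subsingleton W := Module.finrank_zero_iff.mp hm
    exact pad_le t (fun _ : Fin 0 => 0) (fun _ => 0) _ (by simp)
      (fun x y => Subsingleton.elim _ _)
  · refine le_trans (sym_le_aux t hsym (Module.finBasis K V)) ?_
    rw [Nat.cast_le]
    calc Module.finrank K V * (3 * Module.finrank K V - 1) / 2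
        = 1 * (Module.finrank K V * (3 * Module.finrank K V - 1) / 2) := (one_mul _).symm
      _ ≤ Module.finrank K W * (Module.finrank K V * (3 * Module.finrank K V - 1) / 2) :=
          Nat.mul_le_mul_right _ hm
end

section
/- Let C be a finite group with identity element e, K a commutative field, L a finitely generated left K[C]-module, and M a free left K[C]-module with M = ⊕_{c∈C} c·W for a K-subspace W of M. For ψ ∈ Hom_K(L,K) let ψ^C ∈ Hom_{K[C]}(L,K[C]) be defined by ψ^C(m) = Σ_{c∈C} ψ(c⁻¹·m)·c, and for a K-bilinear map u : L × L → W let u^C : L × L → M be defined by u^C(x,y) = Σ_{c∈C} c·u(c⁻¹·x, c⁻¹·y). Then for all β₁, β₂ ∈ Hom_K(L,K) and w ∈ W one has (π_{w,β₁,β₂})^C = γ_{w, β₁^C, β₂^C}. -/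
section

variable (K : Type*) [Field K] (C : Type*) [Group C] [Fintype C]
variable (L M W : Type*)
variable [AddCommGroup L] [Module K L] [DistribMulAction C L] [SMulCommClass C K L]
variable [AddCommGroup M] [Module K M] [DistribMulAction C M] [SMulCommClass C K M]
variable [AddCommGroup W] [Module K W]

/-- The pure bilinear map `π_{w,β₁,β₂} : (x, y) ↦ β₁(x)β₂(y) • w`. -/
def pureBil (β₁ β₂ : L →ₗ[K] K) (w : W) : L → L → W := fun x y => (β₁ x * β₂ y) • w

/-- For `ψ ∈ Hom_K(L,K)`, the `K[C]`-linear map `ψ^C : L → K[C]`,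
`ψ^C(l) = Σ_c ψ(c⁻¹ • l)·c`, identified with the function `c ↦ ψ(c⁻¹ • l)`. -/
def liftForm (β : L →ₗ[K] K) : L → C → K := fun l c => β (c⁻¹ • l)

/-- For a `K`-bilinear map `u : L × L → W`, the `C`-equivariant lift
`u^C(x,y) = Σ_c c • u(c⁻¹ • x, c⁻¹ • y)` valued in `M = ⊕_c c • W`
(with `ι : W → M` the inclusion). -/
noncomputable def liftBil (ι : W →ₗ[K] M) (u : L → L → W) : L → L → M :=
  fun x y => ∑ c : C, c • ι (u (c⁻¹ • x) (c⁻¹ • y))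

/-- The componentwise (diamond) product on `K[C]`, identified with `C → K`. -/
def diamond (a b : C → K) : C → K := fun c => a c * b c

/-- The action of `a ∈ K[C]` on the `K[C]`-module `M`: `a • m = Σ_c a(c) • (c • m)`. -/
noncomputable def kcSmul (a : C → K) (m : M) : M := ∑ c : C, a c • (c • m)

/-- The pure `C`-equivariant bilinear map
`γ_{m,α₁,α₂} : (x, y) ↦ (α₁(x) ⋄ α₂(y)) • m`. -/
noncomputable def gammaFun (m : M) (α₁ α₂ : L → C → K) : L → L → M :=
  fun x y => kcSmul K C M (diamond K C (α₁ x) (α₂ y)) m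

/-- `(π_{w,β₁,β₂})^C = γ_{w, β₁^C, β₂^C}` for `β₁, β₂ ∈ Hom_K(L,K)` and `w ∈ W`,
where `M = ⊕_{c∈C} c • W` is a free `K[C]`-module (encoded by `ι : W → M` with
`(f : C → W) ↦ ∑ c, c • ι (f c)` bijective). -/
theorem stmt6 (ι : W →ₗ[K] M)
    (hΦ : Function.Bijective fun f : C → W => ∑ c : C, c • ι (f c))
    (β₁ β₂ : L →ₗ[K] K) (w : W) :
    liftBil K C L M W ι (pureBil K L W β₁ β₂ w)
      = gammaFun K C L M (ι w) (liftForm K C L β₁) (liftForm K C L β₂) := by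
  funext x y
  simp only [liftBil, pureBil, gammaFun, kcSmul, diamond, liftForm, map_smul]
  exact Finset.sum_congr rfl fun c _ => (smul_comm _ _ _)

end
end

section
/- Let K be a finite field with q elements and n ≥ 1 an integer. The symmetric bilinear complexity of the multiplication map of the quotient algebra K[x]/(x^n), viewed as a symmetric K-bilinear map, is at most μ_q^{sym}(2n − 1). -/
open Polynomial

/-- The symmetric bilinear complexity of multiplication in `K[x]/(x^n)` is at most
`μ_q^{sym}(2n − 1)`, the symmetric bilinear complexity of multiplication in the
degree-`(2n−1)` field extension `L` of the field `K` with `q` elements. -/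
theorem stmt11 (q n : ℕ) (hn : 1 ≤ n)
    (K : Type*) [Field K] [Fintype K] (hcard : Fintype.card K = q)
    (L : Type*) [Field L] [Algebra K L] (hrank : Module.finrank K L = 2 * n - 1) :
    Ssym K (Polynomial K ⧸ Ideal.span {(Polynomial.X : Polynomial K) ^ n})
        (Polynomial K ⧸ Ideal.span {(Polynomial.X : Polynomial K) ^ n})
        (LinearMap.mul K (Polynomial K ⧸ Ideal.span {(Polynomial.X : Polynomial K) ^ n}))
      ≤ Ssym K L L (LinearMap.mul K L) := by
  classical
  set d := 2 * n - 1 with hdd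
  have hd1 : 1 ≤ d := by omega
  have hfin : FiniteDimensional K L := FiniteDimensional.of_finrank_pos (by omega)
  have hfinL : Finite L := Module.finite_of_finite K
  obtain ⟨α, hα⟩ := Field.exists_primitive_element_of_finite_top K L
  have hint : IsIntegral K α := IsIntegral.of_finite K α
  have hdeg : (minpoly K α).natDegree = d := by
    rw [← IntermediateField.adjoin.finrank hint, hα, IntermediateField.finrank_top', hrank]
  -- the evaluation map on polynomials of degree < d
  let E : Polynomial.degreeLT K d →ₗ[K] L :=
    (Polynomial.aeval α).toLinearMap ∘ₗ (Polynomial.degreeLT K d).subtype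
  have hE : ∀ f : Polynomial.degreeLT K d, E f = Polynomial.aeval α (f : Polynomial K) :=
    fun f => rfl
  have hEinj : Function.Injective E := by
    rw [← LinearMap.ker_eq_bot, LinearMap.ker_eq_bot']
    rintro ⟨f, hf⟩ h
    have hf' : f.degree < (d : WithBot ℕ) := Polynomial.mem_degreeLT.mp hf
    have h0 : Polynomial.aeval α f = 0 := h
    refine Subtype.ext (show f = 0 from ?_)
    by_contra hne
    have hle := minpoly.degree_le_of_ne_zero K α hne h0
    rw [Polynomial.degree_eq_natDegree (minpoly.ne_zero hint), hdeg] at hle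
    exact absurd (lt_of_le_of_lt hle hf') (lt_irrefl _)
  haveI : FiniteDimensional K (Polynomial.degreeLT K d) :=
    LinearEquiv.finiteDimensional (Polynomial.degreeLTEquiv K d).symm
  have hfr : Module.finrank K (Polynomial.degreeLT K d) = Module.finrank K L := by
    rw [(Polynomial.degreeLTEquiv K d).finrank_eq, Module.finrank_fin_fun, hrank]
  let D := E.linearEquivOfInjective hEinj hfr
  have hD : ∀ f, D f = E f := fun f => E.linearEquivOfInjective_apply hEinj hfr f
  -- the A side
  have hg : (Polynomial.X ^ n : Polynomial K).Monic := Polynomial.monic_X_pow n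
  let s : (Polynomial K ⧸ Ideal.span {(Polynomial.X : Polynomial K) ^ n}) →ₗ[K] Polynomial K :=
    AdjoinRoot.modByMonicHom hg
  have hs_deg : ∀ x, (s x).degree < (n : WithBot ℕ) := by
    intro x
    obtain ⟨f, rfl⟩ := AdjoinRoot.mk_surjective (g := (Polynomial.X : Polynomial K) ^ n) x
    have : s (AdjoinRoot.mk _ f) = f %ₘ (Polynomial.X ^ n) := AdjoinRoot.modByMonicHom_mk hg f
    rw [this]
    have := Polynomial.degree_modByMonic_lt f hg
    rwa [Polynomial.degree_X_pow] at this
  have hs_mk : ∀ x, AdjoinRoot.mk ((Polynomial.X : Polynomial K) ^ n) (s x) = x :=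
    AdjoinRoot.mk_leftInverse hg
  -- product of two remainders has degree < d
  have key : ∀ a b : WithBot ℕ, a < (n : WithBot ℕ) → b < (n : WithBot ℕ) →
      a + b < (d : WithBot ℕ) := by
    intro a b ha hb
    rcases eq_or_ne a ⊥ with rfl | ha0
    · rw [WithBot.bot_add]; exact bot_lt_iff_ne_bot.mpr (by simp)
    rcases eq_or_ne b ⊥ with rfl | hb0
    · rw [WithBot.add_bot]; exact bot_lt_iff_ne_bot.mpr (by simp)
    lift a to ℕ using ha0 with a
    lift b to ℕ using hb0 with b
    rw [← Nat.cast_withBot, ← Nat.cast_withBot] at *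
    have ha' : a < n := by exact_mod_cast ha
    have hb' : b < n := by exact_mod_cast hb
    exact_mod_cast (show a + b < d by omega)
  have hp_mem : ∀ x y, s x * s y ∈ Polynomial.degreeLT K d := by
    intro x y
    rw [Polynomial.mem_degreeLT]
    calc (s x * s y).degree ≤ (s x).degree + (s y).degree := Polynomial.degree_mul_le _ _
      _ < (d : WithBot ℕ) := key _ _ (hs_deg x) (hs_deg y)
  -- linear maps to transport the decomposition
  let Es : (Polynomial K ⧸ Ideal.span {(Polynomial.X : Polynomial K) ^ n}) →ₗ[K] L :=
    (Polynomial.aeval α).toLinearMap ∘ₗ s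
  let mkl : Polynomial.degreeLT K d →ₗ[K]
      (Polynomial K ⧸ Ideal.span {(Polynomial.X : Polynomial K) ^ n}) :=
    (Ideal.Quotient.mkₐ K (Ideal.span {(Polynomial.X : Polynomial K) ^ n})).toLinearMap ∘ₗ
      (Polynomial.degreeLT K d).subtype
  have main : ∀ x y, x * y = mkl (D.symm (Es x * Es y)) := by
    intro x y
    have h1 : D ⟨s x * s y, hp_mem x y⟩ = Es x * Es y := by
      rw [hD, hE]
      simp only [map_mul]
      rfl
    rw [← h1, LinearEquiv.symm_apply_apply]
    show x * y = Ideal.Quotient.mkₐ K _ (s x * s y)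
    rw [map_mul]
    show x * y = AdjoinRoot.mk _ (s x) * AdjoinRoot.mk _ (s y)
    rw [hs_mk, hs_mk]
    rfl
  refine sInf_le_sInf ?_
  rintro N ⟨k, φ, w, hN, hsum⟩
  refine ⟨k, fun i => (φ i) ∘ₗ Es, fun i => mkl (D.symm (w i)), hN, ?_⟩
  intro x y
  have := main x y
  rw [LinearMap.mul_apply']
  rw [this]
  have hL : (Es x * Es y : L) = ∑ i, (φ i (Es x) * φ i (Es y)) • w i := by
    have := hsum (Es x) (Es y)
    rwa [LinearMap.mul_apply'] at this
  rw [hL, map_sum, map_sum]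
  simp only [map_smul, LinearMap.coe_comp, Function.comp_apply]
end

section
/- Let K be a finite field with q elements and n ≥ 1 an integer with q ≥ 2n − 2. Then the symmetric bilinear complexity of the multiplication map of the quotient algebra K[x]/(x^n), viewed as a symmetric K-bilinear map, is at most 2n − 1. -/
open Polynomial Finset

theorem Ssym_le_of_eq_sum {K V W : Type*} [Field K] [AddCommGroup V] [Module K V]
    [AddCommGroup W] [Module K W] {t : V →ₗ[K] V →ₗ[K] W} {k : ℕ}
    (φ : Fin k → V →ₗ[K] K) (w : Fin k → W)
    (h : ∀ x y, t x y = ∑ i, (φ i x * φ i y) • w i) :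
    Ssym K V W t ≤ k :=
  sInf_le ⟨k, φ, w, rfl, h⟩

theorem Lagrange.eq_sum_smul_basis_add_smul_nodal {F ι : Type*} [Field F] [DecidableEq ι]
    {s : Finset ι} {v : ι → F} (hvs : Set.InjOn v s) {p : F[X]} (hp : p.natDegree ≤ #s) :
    p = ∑ i ∈ s, p.eval (v i) • Lagrange.basis s v i + p.coeff #s • Lagrange.nodal s v := by
  set r := p - p.coeff #s • Lagrange.nodal s v
  have hr : r.degree < #s := by
    refine (degree_lt_iff_coeff_zero r #s).2 fun k hk => ?_
    obtain rfl | hk := hk.eq_or_lt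
    · have hlead : (Lagrange.nodal s v).coeff #s = 1 := by
        simpa [Lagrange.natDegree_nodal] using
          (Lagrange.nodal_monic (s := s) (v := v)).coeff_natDegree
      simp [r, hlead]
    · simp [r, coeff_eq_zero_of_natDegree_lt (hp.trans_lt hk),
        coeff_eq_zero_of_natDegree_lt (Lagrange.natDegree_nodal.trans_lt hk)]
  have hinterp := Lagrange.eq_interpolate hvs hr
  rw [Lagrange.interpolate_apply] at hinterp
  rw [← sub_eq_iff_eq_add]
  refine hinterp.trans (sum_congr rfl fun i hi => ?_)
  simp [r, smul_eq_C_mul, Lagrange.eval_nodal_at_node hi]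

theorem Lagrange.mul_eq_sum_smul_basis_add_smul_nodal {F ι : Type*} [Field F] [DecidableEq ι]
    {s : Finset ι} {v : ι → F} (hvs : Set.InjOn v s) {d : ℕ} (hs : #s = 2 * d) {f g : F[X]}
    (hf : f.natDegree ≤ d) (hg : g.natDegree ≤ d) :
    f * g = ∑ i ∈ s, (f.eval (v i) * g.eval (v i)) • Lagrange.basis s v i
      + (f.coeff d * g.coeff d) • Lagrange.nodal s v := by
  have hfg : (f * g).natDegree ≤ #s := natDegree_mul_le.trans (by omega)
  rw [Lagrange.eq_sum_smul_basis_add_smul_nodal hvs hfg, hs, two_mul,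
    coeff_mul_add_eq_of_natDegree_le hf hg]
  simp only [eval_mul]

theorem Ssym_mul_adjoinRoot_le {K : Type*} [Field K] {g : K[X]} (hg : g.Monic) {d : ℕ}
    (hdeg : g.natDegree = d + 1) (v : Fin (2 * d) ↪ K) :
    Ssym K (AdjoinRoot g) (AdjoinRoot g) (LinearMap.mul K (AdjoinRoot g)) ≤
      (2 * d + 1 : ℕ) := by
  set rep := AdjoinRoot.modByMonicHom hg
  have hrep : ∀ x, (rep x).natDegree ≤ d := by
    intro x
    induction x using AdjoinRoot.induction_on with
    | ih f =>
      have := natDegree_modByMonic_lt f hg (by rintro rfl; simp at hdeg)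
      rw [AdjoinRoot.modByMonicHom_mk]
      omega
  refine Ssym_le_of_eq_sum
    (Fin.snoc (fun i => leval (v i) ∘ₗ rep) (lcoeff K d ∘ₗ rep))
    (Fin.snoc (fun i => AdjoinRoot.mk g (Lagrange.basis univ v i))
      (AdjoinRoot.mk g (Lagrange.nodal univ v))) fun x y => ?_
  have hxy : x * y = AdjoinRoot.mkₐ g (rep x * rep y) := by
    rw [map_mul, AdjoinRoot.coe_mkₐ, AdjoinRoot.mk_leftInverse hg x,
      AdjoinRoot.mk_leftInverse hg y]
  rw [LinearMap.mul_apply', hxy, Lagrange.mul_eq_sum_smul_basis_add_smul_nodal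
    v.injective.injOn (card_fin _) (hrep x) (hrep y), Fin.sum_univ_castSucc]
  simp [map_sum]

/-- If `K` has `q ≥ 2n − 2` elements, the symmetric bilinear complexity of
multiplication in `K[x]/(x^n)` is at most `2n − 1`. -/
theorem stmt12 (q n : ℕ) (hn : 1 ≤ n) (hq : 2 * n - 2 ≤ q)
    (K : Type*) [Field K] [Fintype K] (hcard : Fintype.card K = q) :
    Ssym K (Polynomial K ⧸ Ideal.span {(Polynomial.X : Polynomial K) ^ n})
        (Polynomial K ⧸ Ideal.span {(Polynomial.X : Polynomial K) ^ n})
        (LinearMap.mul K (Polynomial K ⧸ Ideal.span {(Polynomial.X : Polynomial K) ^ n}))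
      ≤ ((2 * n - 1 : ℕ) : ℕ∞) := by
  obtain ⟨d, rfl⟩ := Nat.exists_eq_add_of_le' hn
  obtain ⟨v⟩ : Nonempty (Fin (2 * d) ↪ K) :=
    Function.Embedding.nonempty_of_card_le (by rw [Fintype.card_fin, hcard]; omega)
  have h := Ssym_mul_adjoinRoot_le (monic_X_pow (d + 1)) (natDegree_X_pow _) v
  rwa [show 2 * (d + 1) - 1 = 2 * d + 1 by omega]
end

section
/- Let K be a commutative field, V and W finite-dimensional K-vector spaces, t : V × V → W a symmetric K-bilinear map, and L a finite field extension of K. Let t_L = t ⊗_K L be the induced symmetric L-bilinear map on V ⊗_K L, and let S_K(×_L) denote the symmetric complexity of the multiplication map of L viewed as a symmetric K-bilinear map. Then S_K(t) ≤ S_L(t_L) · S_K(×_L). -/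
open scoped TensorProduct

set_option maxHeartbeats 1000000 in
/-- Restriction of scalars: for a symmetric `K`-bilinear map `t : V × V → W`, a finite
field extension `L/K` and the base-changed map `t_L`, one has
`S_K(t) ≤ S_L(t_L) · S_K(×_L)`, where `×_L` is the multiplication of `L` viewed
as a symmetric `K`-bilinear map. -/
theorem stmt14 (K 𝕃 V W : Type*) [Field K] [Field 𝕃] [Algebra K 𝕃] [FiniteDimensional K 𝕃]
    [AddCommGroup V] [Module K V] [FiniteDimensional K V]
    [AddCommGroup W] [Module K W] [FiniteDimensional K W]
    (t : V →ₗ[K] V →ₗ[K] W) (hsym : ∀ x y, t x y = t y x)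
    (tL : (𝕃 ⊗[K] V) →ₗ[𝕃] (𝕃 ⊗[K] V) →ₗ[𝕃] (𝕃 ⊗[K] W))
    (htL : ∀ (a b : 𝕃) (x y : V), tL (a ⊗ₜ[K] x) (b ⊗ₜ[K] y) = (a * b) ⊗ₜ[K] (t x y)) :
    Ssym K V W t ≤ Ssym 𝕃 (𝕃 ⊗[K] V) (𝕃 ⊗[K] W) tL * Ssym K 𝕃 𝕃 (LinearMap.mul K 𝕃) := by
  classical
  -- a K-linear projection `p : 𝕃 → K` with `p 1 = 1`
  obtain ⟨p, hp1⟩ : ∃ p : 𝕃 →ₗ[K] K, p 1 = 1 := by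
    obtain ⟨g, hg⟩ := (Algebra.linearMap K 𝕃).exists_leftInverse_of_injective
      (LinearMap.ker_eq_bot.mpr (algebraMap K 𝕃).injective)
    exact ⟨g, by simpa using LinearMap.congr_fun hg 1⟩
  -- the induced retraction `π : 𝕃 ⊗ W → W`
  set π : 𝕃 ⊗[K] W →ₗ[K] W := TensorProduct.lift ((LinearMap.lsmul K W).comp p) with hπdef
  have hπtmul : ∀ (a : 𝕃) (u : W), π (a ⊗ₜ[K] u) = p a • u := fun a u => by
    simp [hπdef]
  have hπone : ∀ u : W, π ((1 : 𝕃) ⊗ₜ[K] u) = u := fun u => by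
    rw [hπtmul, hp1, one_smul]
  have key : ∀ x y, t x y = π (tL ((1 : 𝕃) ⊗ₜ[K] x) ((1 : 𝕃) ⊗ₜ[K] y)) := fun x y => by
    rw [htL, one_mul, hπone]
  rw [Ssym, Ssym, Ssym]
  set S := {N : ℕ∞ | ∃ (k : ℕ) (φ : Fin k → (V →ₗ[K] K)) (w : Fin k → W),
    N = k ∧ ∀ x y, t x y = ∑ i, (φ i x * φ i y) • w i} with hS
  set A := {N : ℕ∞ | ∃ (k : ℕ) (φ : Fin k → ((𝕃 ⊗[K] V) →ₗ[𝕃] 𝕃)) (w : Fin k → 𝕃 ⊗[K] W),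
    N = k ∧ ∀ x y, tL x y = ∑ i, (φ i x * φ i y) • w i} with hA
  set B := {N : ℕ∞ | ∃ (k : ℕ) (φ : Fin k → (𝕃 →ₗ[K] K)) (w : Fin k → 𝕃),
    N = k ∧ ∀ x y, (LinearMap.mul K 𝕃) x y = ∑ i, (φ i x * φ i y) • w i} with hB
  -- trivial case: `t = 0`
  by_cases ht0 : ∀ x y, t x y = 0
  · refine le_trans (sInf_le ?_) zero_le
    exact ⟨0, fun i => i.elim0, fun i => i.elim0, by simp, fun x y => by simp [ht0]⟩
  push_neg at ht0
  obtain ⟨x₀, y₀, hxy₀⟩ := ht0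
  -- every element of `B` is positive
  have hBpos : ∀ N ∈ B, (1 : ℕ∞) ≤ N := by
    rintro N ⟨k, ψ, c, rfl, hdec⟩
    rw [Nat.one_le_cast.symm.symm]
    norm_cast
    by_contra hk
    interval_cases k
    have := hdec 1 1
    simp at this
  have hbne : sInf B ≠ 0 := by
    have : (1 : ℕ∞) ≤ sInf B := le_sInf hBpos
    intro h; rw [h] at this; exact absurd this (by simp)
  -- every element of `A` is positive
  have hApos : ∀ N ∈ A, (1 : ℕ∞) ≤ N := by
    rintro N ⟨k, φ, w, rfl, hdec⟩
    norm_cast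
    by_contra hk
    interval_cases k
    have := key x₀ y₀
    rw [hdec] at this
    simp at this
    exact hxy₀ this
  have hane : sInf A ≠ 0 := by
    have : (1 : ℕ∞) ≤ sInf A := le_sInf hApos
    intro h; rw [h] at this; exact absurd this (by simp)
  rcases Set.eq_empty_or_nonempty A with hAe | hAne
  · rw [hAe, sInf_empty]
    rw [ENat.top_mul hbne]
    exact le_top
  rcases Set.eq_empty_or_nonempty B with hBe | hBne
  · rw [hBe, sInf_empty, ENat.mul_top hane]
    exact le_top
  -- both infima are attained
  obtain ⟨m, φ, w, ham, hdecA⟩ := csInf_mem hAne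
  obtain ⟨n, ψ, c, hbn, hdecB⟩ := csInf_mem hBne
  rw [ham, hbn, ← Nat.cast_mul]
  apply sInf_le
  set e : Fin (m * n) ≃ Fin m × Fin n := finProdFinEquiv.symm with he
  refine ⟨m * n,
    fun l => (ψ (e l).2).comp (((φ (e l).1).restrictScalars K).comp
      ((TensorProduct.mk K 𝕃 V) 1)),
    fun l => π ((c (e l).2) • w (e l).1), rfl, fun x y => ?_⟩
  have step : ∀ i : Fin m,
      π ((φ i ((1:𝕃) ⊗ₜ[K] x) * φ i ((1:𝕃) ⊗ₜ[K] y)) • w i)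
      = ∑ j : Fin n, (ψ j (φ i ((1:𝕃) ⊗ₜ[K] x)) * ψ j (φ i ((1:𝕃) ⊗ₜ[K] y)))
          • π (c j • w i) := by
    intro i
    have hm : φ i ((1:𝕃) ⊗ₜ[K] x) * φ i ((1:𝕃) ⊗ₜ[K] y)
        = ∑ j : Fin n, (ψ j (φ i ((1:𝕃) ⊗ₜ[K] x)) * ψ j (φ i ((1:𝕃) ⊗ₜ[K] y))) • c j := by
      simpa using hdecB (φ i ((1:𝕃) ⊗ₜ[K] x)) (φ i ((1:𝕃) ⊗ₜ[K] y))
    rw [hm, Finset.sum_smul, map_sum]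
    refine Finset.sum_congr rfl fun j _ => ?_
    rw [smul_assoc, map_smul]
  calc t x y = π (tL ((1:𝕃) ⊗ₜ[K] x) ((1:𝕃) ⊗ₜ[K] y)) := key x y
    _ = ∑ i : Fin m, π ((φ i ((1:𝕃) ⊗ₜ[K] x) * φ i ((1:𝕃) ⊗ₜ[K] y)) • w i) := by
        rw [hdecA, map_sum]
    _ = ∑ i : Fin m, ∑ j : Fin n,
          (ψ j (φ i ((1:𝕃) ⊗ₜ[K] x)) * ψ j (φ i ((1:𝕃) ⊗ₜ[K] y))) • π (c j • w i) :=
        Finset.sum_congr rfl fun i _ => step i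
    _ = ∑ q : Fin m × Fin n,
          (ψ q.2 (φ q.1 ((1:𝕃) ⊗ₜ[K] x)) * ψ q.2 (φ q.1 ((1:𝕃) ⊗ₜ[K] y)))
            • π (c q.2 • w q.1) := by rw [Fintype.sum_prod_type]
    _ = _ := by
        rw [← Equiv.sum_comp e (fun q : Fin m × Fin n =>
          (ψ q.2 (φ q.1 ((1:𝕃) ⊗ₜ[K] x)) * ψ q.2 (φ q.1 ((1:𝕃) ⊗ₜ[K] y)))
            • π (c q.2 • w q.1))]
        rfl
end

section
/- Let C be a finite group, K a commutative field, L and M finitely generated left K[C]-modules, and t : L × L → M a symmetric C-equivariant K-bilinear map. Let 𝐋 be a finite field extension of K, set L_𝐋 = L ⊗_K 𝐋, M_𝐋 = M ⊗_K 𝐋 and t_𝐋 = t ⊗_K 𝐋 (a symmetric C-equivariant 𝐋-bilinear map between 𝐋[C]-modules), and let S_K(×_𝐋) be the symmetric complexity of the multiplication map of 𝐋 viewed as a symmetric K-bilinear map. Then S_{𝐋,C}(t_𝐋) ≤ S_{K,C}(t) and S_{K,C}(t) ≤ S_{𝐋,C}(t_𝐋) · S_K(×_𝐋). -/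
open scoped TensorProduct

/-- Symmetric equivariant complexity `S_{K,C}(t)` of a symmetric `C`-equivariant
`K`-bilinear map between `K[C]`-modules whose module structures are given by the
`K`-linear `C`-actions `ρL`, `ρM`.  Identifying `K[C]` with `C → K`, a `K[C]`-linear
`α : L → K[C]` satisfies `α (c • l) x = α l (c⁻¹ * x)`, and a pure symmetric
`C`-equivariant map is `(x,y) ↦ (α x ⋄ α y) • m = ∑ c, (α x c * α y c) • (c • m)`. -/
noncomputable def SsymC (K : Type*) [Field K] (C : Type*) [Group C] [Fintype C]
    (L M : Type*) [AddCommGroup L] [Module K L] [AddCommGroup M] [Module K M]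
    (ρL : C → L →ₗ[K] L) (ρM : C → M →ₗ[K] M) (t : L →ₗ[K] L →ₗ[K] M) : ℕ∞ :=
  sInf {N : ℕ∞ | ∃ (k : ℕ) (α : Fin k → (L →ₗ[K] (C → K))) (m : Fin k → M),
    N = k ∧ (∀ i (c : C) (l : L) (x : C), α i (ρL c l) x = α i l (c⁻¹ * x)) ∧
    ∀ x y, t x y = ∑ i, ∑ c : C, (α i x c * α i y c) • ρM c (m i)}

private lemma aux_pi (K 𝕃 : Type*) [Field K] [Field 𝕃] [Algebra K 𝕃]
    [FiniteDimensional K 𝕃] (M : Type*) [AddCommGroup M] [Module K M] :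
    ∃ π : (𝕃 ⊗[K] M) →ₗ[K] M, ∀ v : M, π ((1 : 𝕃) ⊗ₜ[K] v) = v := by
  obtain ⟨θ, hθ⟩ : ∃ θ : Module.Dual K 𝕃, θ 1 = 1 := by
    have h1 : ¬ (∀ ψ : Module.Dual K 𝕃, ψ (1 : 𝕃) = 0) := by
      rw [Module.forall_dual_apply_eq_zero_iff]
      exact one_ne_zero
    push_neg at h1
    obtain ⟨ψ, hψ⟩ := h1
    exact ⟨(ψ 1)⁻¹ • ψ, by simp [inv_mul_cancel₀ hψ]⟩
  exact ⟨TensorProduct.lift ((LinearMap.lsmul K M) ∘ₗ θ), fun v => by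
    simp [TensorProduct.lift.tmul, hθ]⟩

private lemma aux_ext (K 𝕃 : Type*) [Field K] [Field 𝕃] [Algebra K 𝕃] [FiniteDimensional K 𝕃]
    (C : Type*) [Group C] [Fintype C]
    (L M : Type*)
    [AddCommGroup L] [Module K L] [DistribMulAction C L] [SMulCommClass C K L]
    [AddCommGroup M] [Module K M] [DistribMulAction C M] [SMulCommClass C K M]
    (t : L →ₗ[K] L →ₗ[K] M)
    (ρL : C → (𝕃 ⊗[K] L) →ₗ[𝕃] (𝕃 ⊗[K] L))
    (hρL : ∀ (c : C) (a : 𝕃) (x : L), ρL c (a ⊗ₜ[K] x) = a ⊗ₜ[K] (c • x))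
    (ρM : C → (𝕃 ⊗[K] M) →ₗ[𝕃] (𝕃 ⊗[K] M))
    (hρM : ∀ (c : C) (a : 𝕃) (x : M), ρM c (a ⊗ₜ[K] x) = a ⊗ₜ[K] (c • x))
    (tL : (𝕃 ⊗[K] L) →ₗ[𝕃] (𝕃 ⊗[K] L) →ₗ[𝕃] (𝕃 ⊗[K] M))
    (htL : ∀ (a b : 𝕃) (x y : L), tL (a ⊗ₜ[K] x) (b ⊗ₜ[K] y) = (a * b) ⊗ₜ[K] (t x y))
    (k : ℕ) (α : Fin k → (L →ₗ[K] (C → K))) (m : Fin k → M)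
    (hα : ∀ i (c : C) (l : L) (x : C),
      α i ((DistribMulAction.toLinearMap K L c) l) x = α i l (c⁻¹ * x))
    (ht : ∀ x y, t x y = ∑ i, ∑ c : C,
      (α i x c * α i y c) • (DistribMulAction.toLinearMap K M c) (m i)) :
    ∃ (A : Fin k → ((𝕃 ⊗[K] L) →ₗ[𝕃] (C → 𝕃))) (m' : Fin k → (𝕃 ⊗[K] M)),
      (∀ i (c : C) (z : 𝕃 ⊗[K] L) (x : C), A i (ρL c z) x = A i z (c⁻¹ * x)) ∧
      ∀ z w, tL z w = ∑ i, ∑ c : C, (A i z c * A i w c) • ρM c (m' i) := by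
  classical
  set g : Fin k → (L →ₗ[K] (C → 𝕃)) := fun i =>
    LinearMap.pi (fun c => (Algebra.linearMap K 𝕃) ∘ₗ ((LinearMap.proj c) ∘ₗ α i)) with hg
  have hgapp : ∀ i l c, g i l c = algebraMap K 𝕃 (α i l c) := fun i l c => rfl
  refine ⟨fun i => TensorProduct.AlgebraTensorModule.lift
      (LinearMap.toSpanSingleton 𝕃 (L →ₗ[K] (C → 𝕃)) (g i)),
    fun i => (1 : 𝕃) ⊗ₜ m i, ?_, ?_⟩
  · intro i c z x
    induction z using TensorProduct.induction_on with
    | zero => simp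
    | tmul a l =>
        simp only [TensorProduct.AlgebraTensorModule.lift_apply, hρL,
          TensorProduct.lift.tmul, LinearMap.coe_restrictScalars,
          LinearMap.toSpanSingleton_apply, LinearMap.smul_apply, Pi.smul_apply, hgapp]
        rw [show (c • l) = (DistribMulAction.toLinearMap K L c) l from rfl, hα]
    | add z w hz hw => simp_all
  · intro z w
    induction z using TensorProduct.induction_on with
    | zero => simp
    | add z₁ z₂ h1 h2 =>
        simp only [map_add, LinearMap.add_apply, Pi.add_apply, add_mul, add_smul,
          Finset.sum_add_distrib, h1, h2]
    | tmul a x =>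
      induction w using TensorProduct.induction_on with
      | zero => simp
      | add w₁ w₂ h1 h2 =>
          simp only [map_add, LinearMap.add_apply, Pi.add_apply, mul_add, add_smul,
            Finset.sum_add_distrib, h1, h2]
      | tmul b y =>
          rw [htL, ht]
          simp only [TensorProduct.AlgebraTensorModule.lift_apply]
          rw [TensorProduct.tmul_sum]
          refine Finset.sum_congr rfl fun i _ => ?_
          rw [TensorProduct.tmul_sum]
          refine Finset.sum_congr rfl fun c _ => ?_
          simp only [TensorProduct.lift.tmul, LinearMap.coe_restrictScalars,
            LinearMap.toSpanSingleton_apply, LinearMap.smul_apply, Pi.smul_apply,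
            smul_eq_mul, hgapp, hρM]
          rw [TensorProduct.tmul_smul, TensorProduct.smul_tmul']
          congr 1
          rw [Algebra.smul_def, map_mul, smul_eq_mul, mul_one]; ring

private lemma aux_desc (K 𝕃 : Type*) [Field K] [Field 𝕃] [Algebra K 𝕃] [FiniteDimensional K 𝕃]
    (C : Type*) [Group C] [Fintype C]
    (L M : Type*)
    [AddCommGroup L] [Module K L] [DistribMulAction C L] [SMulCommClass C K L]
    [AddCommGroup M] [Module K M] [DistribMulAction C M] [SMulCommClass C K M]
    (t : L →ₗ[K] L →ₗ[K] M)
    (ρL : C → (𝕃 ⊗[K] L) →ₗ[𝕃] (𝕃 ⊗[K] L))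
    (hρL : ∀ (c : C) (a : 𝕃) (x : L), ρL c (a ⊗ₜ[K] x) = a ⊗ₜ[K] (c • x))
    (ρM : C → (𝕃 ⊗[K] M) →ₗ[𝕃] (𝕃 ⊗[K] M))
    (hρM : ∀ (c : C) (a : 𝕃) (x : M), ρM c (a ⊗ₜ[K] x) = a ⊗ₜ[K] (c • x))
    (tL : (𝕃 ⊗[K] L) →ₗ[𝕃] (𝕃 ⊗[K] L) →ₗ[𝕃] (𝕃 ⊗[K] M))
    (htL : ∀ (a b : 𝕃) (x y : L), tL (a ⊗ₜ[K] x) (b ⊗ₜ[K] y) = (a * b) ⊗ₜ[K] (t x y))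
    (k : ℕ) (β : Fin k → ((𝕃 ⊗[K] L) →ₗ[𝕃] (C → 𝕃))) (n : Fin k → (𝕃 ⊗[K] M))
    (hβ : ∀ i (c : C) (z : 𝕃 ⊗[K] L) (x : C), β i (ρL c z) x = β i z (c⁻¹ * x))
    (htdec : ∀ z w, tL z w = ∑ i, ∑ c : C, (β i z c * β i w c) • ρM c (n i))
    (r : ℕ) (φ : Fin r → (𝕃 →ₗ[K] K)) (w : Fin r → 𝕃)
    (hmul : ∀ a b : 𝕃, LinearMap.mul K 𝕃 a b = ∑ j, (φ j a * φ j b) • w j) :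
    ∃ (α : Fin (k * r) → (L →ₗ[K] (C → K))) (m' : Fin (k * r) → M),
      (∀ p (c : C) (l : L) (x : C),
        α p ((DistribMulAction.toLinearMap K L c) l) x = α p l (c⁻¹ * x)) ∧
      ∀ x y, t x y = ∑ p, ∑ c : C,
        (α p x c * α p y c) • (DistribMulAction.toLinearMap K M c) (m' p) := by
  classical
  -- a K-linear functional θ on 𝕃 with θ 1 = 1
  obtain ⟨θ, hθ⟩ : ∃ θ : Module.Dual K 𝕃, θ 1 = 1 := by
    have h1 : ¬ (∀ ψ : Module.Dual K 𝕃, ψ (1 : 𝕃) = 0) := by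
      rw [Module.forall_dual_apply_eq_zero_iff]
      exact one_ne_zero
    push_neg at h1
    obtain ⟨ψ, hψ⟩ := h1
    exact ⟨(ψ 1)⁻¹ • ψ, by simp [inv_mul_cancel₀ hψ]⟩
  set π : (𝕃 ⊗[K] M) →ₗ[K] M := TensorProduct.lift ((LinearMap.lsmul K M) ∘ₗ θ) with hπ
  have hπ1 : ∀ v : M, π ((1 : 𝕃) ⊗ₜ[K] v) = v := by
    intro v; simp [hπ, TensorProduct.lift.tmul, hθ]
  have hπC : ∀ (c : C) (u : 𝕃) (v : 𝕃 ⊗[K] M), π (u • ρM c v) = c • π (u • v) := by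
    intro c u v
    induction v using TensorProduct.induction_on with
    | zero => simp
    | add v₁ v₂ h1 h2 => simp only [map_add, smul_add, h1, h2]
    | tmul a x =>
        rw [hρM, TensorProduct.smul_tmul', TensorProduct.smul_tmul']
        simp only [hπ, TensorProduct.lift.tmul, LinearMap.comp_apply,
          LinearMap.lsmul_apply, smul_eq_mul]
        exact (smul_comm c _ x).symm
  refine ⟨fun p => LinearMap.pi (fun c =>
      (φ (finProdFinEquiv.symm p).2) ∘ₗ ((LinearMap.proj c) ∘ₗ
        (((β (finProdFinEquiv.symm p).1).restrictScalars K) ∘ₗ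
          ((TensorProduct.mk K 𝕃 L) 1)))),
    fun p => π ((w (finProdFinEquiv.symm p).2) • n (finProdFinEquiv.symm p).1), ?_, ?_⟩
  · intro p c l x
    simp only [LinearMap.pi_apply, LinearMap.comp_apply, LinearMap.proj_apply,
      LinearMap.coe_restrictScalars, TensorProduct.mk_apply,
      DistribMulAction.toLinearMap, DistribSMul.toLinearMap_apply]
    rw [show (1 : 𝕃) ⊗ₜ[K] (c • l) = ρL c ((1 : 𝕃) ⊗ₜ[K] l) from (hρL c 1 l).symm, hβ]
  · intro x y
    have step1 : t x y = π (tL ((1:𝕃) ⊗ₜ[K] x) ((1:𝕃) ⊗ₜ[K] y)) := by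
      rw [htL, one_mul, hπ1]
    rw [step1, htdec, map_sum]
    rw [← Equiv.sum_comp finProdFinEquiv
      (fun p => ∑ c : C, _ • (DistribMulAction.toLinearMap K M c) _)]
    rw [Fintype.sum_prod_type]
    refine Finset.sum_congr rfl fun i _ => ?_
    rw [map_sum, Finset.sum_comm]
    refine Finset.sum_congr rfl fun c _ => ?_
    have key : (β i ((1:𝕃) ⊗ₜ[K] x) c * β i ((1:𝕃) ⊗ₜ[K] y) c) • ρM c (n i)
        = ∑ j, (φ j (β i ((1:𝕃) ⊗ₜ[K] x) c) * φ j (β i ((1:𝕃) ⊗ₜ[K] y) c)) •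
            ((w j) • ρM c (n i)) := by
      rw [show (β i ((1:𝕃) ⊗ₜ[K] x) c * β i ((1:𝕃) ⊗ₜ[K] y) c)
          = LinearMap.mul K 𝕃 (β i ((1:𝕃) ⊗ₜ[K] x) c) (β i ((1:𝕃) ⊗ₜ[K] y) c) from rfl,
        hmul, Finset.sum_smul]
      refine Finset.sum_congr rfl fun j _ => ?_
      rw [smul_assoc]
    rw [key, map_sum]
    refine Finset.sum_congr rfl fun j _ => ?_
    rw [LinearMap.map_smul, hπC]
    simp [Equiv.symm_apply_apply, DistribMulAction.toLinearMap, DistribSMul.toLinearMap_apply]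

/-- Extension of scalars for equivariant complexity: for a symmetric `C`-equivariant
`K`-bilinear `t : L × L → M` and a finite field extension `𝕃/K`, the base-changed
symmetric `C`-equivariant `𝕃`-bilinear map `t_𝕃` satisfies
`S_{𝕃,C}(t_𝕃) ≤ S_{K,C}(t)` and `S_{K,C}(t) ≤ S_{𝕃,C}(t_𝕃) · S_K(×_𝕃)`. -/
theorem stmt15 (K 𝕃 : Type*) [Field K] [Field 𝕃] [Algebra K 𝕃] [FiniteDimensional K 𝕃]
    (C : Type*) [Group C] [Fintype C]
    (L M : Type*)
    [AddCommGroup L] [Module K L] [DistribMulAction C L] [SMulCommClass C K L]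
    [Module.Finite K L]
    [AddCommGroup M] [Module K M] [DistribMulAction C M] [SMulCommClass C K M]
    [Module.Finite K M]
    (t : L →ₗ[K] L →ₗ[K] M)
    (hsym : ∀ x y, t x y = t y x)
    (heq : ∀ (c : C) (x y : L), t (c • x) (c • y) = c • t x y)
    (ρL : C → (𝕃 ⊗[K] L) →ₗ[𝕃] (𝕃 ⊗[K] L))
    (hρL : ∀ (c : C) (a : 𝕃) (x : L), ρL c (a ⊗ₜ[K] x) = a ⊗ₜ[K] (c • x))
    (ρM : C → (𝕃 ⊗[K] M) →ₗ[𝕃] (𝕃 ⊗[K] M))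
    (hρM : ∀ (c : C) (a : 𝕃) (x : M), ρM c (a ⊗ₜ[K] x) = a ⊗ₜ[K] (c • x))
    (tL : (𝕃 ⊗[K] L) →ₗ[𝕃] (𝕃 ⊗[K] L) →ₗ[𝕃] (𝕃 ⊗[K] M))
    (htL : ∀ (a b : 𝕃) (x y : L), tL (a ⊗ₜ[K] x) (b ⊗ₜ[K] y) = (a * b) ⊗ₜ[K] (t x y)) :
    SsymC 𝕃 C (𝕃 ⊗[K] L) (𝕃 ⊗[K] M) ρL ρM tL ≤
        SsymC K C L M (fun c => DistribMulAction.toLinearMap K L c)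
          (fun c => DistribMulAction.toLinearMap K M c) t ∧
      SsymC K C L M (fun c => DistribMulAction.toLinearMap K L c)
          (fun c => DistribMulAction.toLinearMap K M c) t ≤
        SsymC 𝕃 C (𝕃 ⊗[K] L) (𝕃 ⊗[K] M) ρL ρM tL * Ssym K 𝕃 𝕃 (LinearMap.mul K 𝕃) := by
  classical
  rw [SsymC, SsymC, Ssym]
  set SKs := {N : ℕ∞ | ∃ (k : ℕ) (α : Fin k → (L →ₗ[K] (C → K))) (m : Fin k → M),
    N = k ∧ (∀ i (c : C) (l : L) (x : C),
      α i ((DistribMulAction.toLinearMap K L c) l) x = α i l (c⁻¹ * x)) ∧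
    ∀ x y, t x y = ∑ i, ∑ c : C,
      (α i x c * α i y c) • (DistribMulAction.toLinearMap K M c) (m i)} with hSKs
  set SLs := {N : ℕ∞ | ∃ (k : ℕ)
      (β : Fin k → ((𝕃 ⊗[K] L) →ₗ[𝕃] (C → 𝕃))) (n : Fin k → (𝕃 ⊗[K] M)),
    N = k ∧ (∀ i (c : C) (z : 𝕃 ⊗[K] L) (x : C), β i (ρL c z) x = β i z (c⁻¹ * x)) ∧
    ∀ z w, tL z w = ∑ i, ∑ c : C, (β i z c * β i w c) • ρM c (n i)} with hSLs
  set Sm := {N : ℕ∞ | ∃ (r : ℕ) (φ : Fin r → (𝕃 →ₗ[K] K)) (w : Fin r → 𝕃),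
    N = r ∧ ∀ a b, LinearMap.mul K 𝕃 a b = ∑ j, (φ j a * φ j b) • w j} with hSm
  have hSmne : sInf Sm ≠ 0 := by
    intro h0
    have hne : Sm.Nonempty := by
      by_contra hemp
      rw [Set.not_nonempty_iff_eq_empty] at hemp
      rw [hemp, sInf_empty] at h0
      exact ENat.top_ne_zero h0
    obtain ⟨r, φ, w, hr, hmul⟩ := csInf_mem hne
    rw [h0] at hr
    have : r = 0 := by exact_mod_cast hr.symm
    subst this
    have h11 := hmul 1 1
    simp only [Finset.univ_eq_empty, Finset.sum_empty] at h11
    have h12 : (1 : 𝕃) * 1 = 0 := h11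
    rw [one_mul] at h12
    exact one_ne_zero h12
  constructor
  · apply sInf_le_sInf
    rintro N ⟨k, α, m, rfl, hα, ht⟩
    obtain ⟨A, m', hA, hAt⟩ := aux_ext K 𝕃 C L M t ρL hρL ρM hρM tL htL k α m hα ht
    exact ⟨k, A, m', rfl, hA, hAt⟩
  · by_cases h1 : SLs.Nonempty
    · obtain ⟨k, β, n, hNk, hβ, htdec⟩ := csInf_mem h1
      by_cases h2 : Sm.Nonempty
      · obtain ⟨r, φ, w, hNr, hmul⟩ := csInf_mem h2
        obtain ⟨α, m', hα, ht⟩ := aux_desc K 𝕃 C L M t ρL hρL ρM hρM tL htL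
          k β n hβ htdec r φ w hmul
        have mem : ((k * r : ℕ) : ℕ∞) ∈ SKs := ⟨k * r, α, m', rfl, hα, ht⟩
        calc sInf SKs ≤ ((k * r : ℕ) : ℕ∞) := sInf_le mem
          _ = sInf SLs * sInf Sm := by rw [hNk, hNr, Nat.cast_mul]
      · rcases Nat.eq_zero_or_pos k with hk | hk
        · subst hk
          obtain ⟨π, hπ1⟩ := aux_pi K 𝕃 M
          have ht0 : ∀ x y : L, t x y = 0 := by
            intro x y
            have h := htdec ((1:𝕃) ⊗ₜ[K] x) ((1:𝕃) ⊗ₜ[K] y)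
            rw [htL, one_mul] at h
            simp only [Finset.univ_eq_empty, Finset.sum_empty] at h
            have := congrArg π h
            rw [hπ1, map_zero] at this
            exact this
          have mem : ((0 : ℕ) : ℕ∞) ∈ SKs :=
            ⟨0, fun i => 0, fun i => 0, rfl, fun i => i.elim0, by
              intro x y
              simp [ht0 x y]⟩
          calc sInf SKs ≤ ((0 : ℕ) : ℕ∞) := sInf_le mem
            _ = 0 := by simp
            _ ≤ sInf SLs * sInf Sm := zero_le
        · rw [Set.not_nonempty_iff_eq_empty] at h2
          rw [h2, sInf_empty, ENat.mul_top (by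
            rw [hNk]; exact Nat.cast_ne_zero.mpr hk.ne')]
          exact le_top
    · rw [Set.not_nonempty_iff_eq_empty] at h1
      rw [h1, sInf_empty, ENat.top_mul hSmne]
      exact le_top
end
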